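/- arXiv:1803.00351 — 2 statements merged into one kernel-verified Lean document; each statement's English description precedes it below -/
import Mathlib

section
/- Let 1 ≤ p < ∞. A Banach space X has the property that every weakly-p-Dunford-Pettis subset of X is relatively weakly compact if and only if for every Banach space Y, every operator T: Y → X whose adjoint T*: X* → Y* is p-convergent is weakly compact. Moreover it suffices to test with Y = ℓ₁. -/
open Filter Topology Metric NormedSpace Bornology ENNReal

noncomputable section

section Defs
variable {X Y : Type*} [NormedAddCommGroup X] [NormedSpace ℝ X]
  [NormedAddCommGroup Y] [NormedSpace ℝ Y]

/-- A sequence `x` in `X` is weakly `p`-summable if `(f (x n))ₙ ∈ ℓ_p` for every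
continuous linear functional `f`. -/
def WeaklyPSummable (p : ℝ≥0∞) (x : ℕ → X) : Prop :=
  ∀ f : StrongDual ℝ X, Memℓp (fun n => f (x n)) p

/-- A sequence is norm null if its norms tend to `0`. -/
def NormNull (x : ℕ → X) : Prop :=
  Tendsto (fun n => ‖x n‖) atTop (𝓝 0)

/-- An operator is `p`-convergent if it maps weakly `p`-summable sequences to norm
null sequences. -/
def PConvergent (p : ℝ≥0∞) (T : X →L[ℝ] Y) : Prop :=
  ∀ x : ℕ → X, WeaklyPSummable p x → NormNull fun n => T (x n)

/-- The adjoint (dual) operator `T* : Y* → X*`, `g ↦ g ∘ T`. -/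
def adjOp (T : X →L[ℝ] Y) : StrongDual ℝ Y →L[ℝ] StrongDual ℝ X :=
  (ContinuousLinearMap.compL ℝ X Y ℝ).flip T

/-- Weak convergence of a sequence to a point. -/
def WeaklyConvTo (x : ℕ → X) (a : X) : Prop :=
  ∀ f : StrongDual ℝ X, Tendsto (fun n => f (x n)) atTop (𝓝 (f a))

/-- A sequence is weakly Cauchy if `(f (x n))` converges for every functional `f`. -/
def WeaklyCauchySeq (x : ℕ → X) : Prop :=
  ∀ f : StrongDual ℝ X, ∃ l : ℝ, Tendsto (fun n => f (x n)) atTop (𝓝 l)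

/-- A set is relatively weakly compact iff every sequence in it has a subsequence
weakly convergent to a point of the space (sequential form, by Eberlein–Šmulian). -/
def RelWeaklyCompact (A : Set X) : Prop :=
  ∀ x : ℕ → X, (∀ n, x n ∈ A) →
    ∃ (a : X) (φ : ℕ → ℕ), StrictMono φ ∧ WeaklyConvTo (fun k => x (φ k)) a

/-- A set is weakly precompact if every sequence in it has a weakly Cauchy subsequence. -/
def WeaklyPrecompact (A : Set X) : Prop :=
  ∀ x : ℕ → X, (∀ n, x n ∈ A) →
    ∃ φ : ℕ → ℕ, StrictMono φ ∧ WeaklyCauchySeq (fun k => x (φ k))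

/-- A weakly compact operator: the image of the closed unit ball is relatively
weakly compact. -/
def WeaklyCompactOp (T : X →L[ℝ] Y) : Prop :=
  RelWeaklyCompact (⇑T '' closedBall 0 1)

/-- A weakly precompact operator: the image of the closed unit ball is weakly
precompact. -/
def WeaklyPrecompactOp (T : X →L[ℝ] Y) : Prop :=
  WeaklyPrecompact (⇑T '' closedBall 0 1)

/-- `g n → 0` uniformly on `A`. -/
def UnifNullOn (g : ℕ → X → ℝ) (A : Set X) : Prop :=
  ∀ ε > (0 : ℝ), ∃ N, ∀ n ≥ N, ∀ a ∈ A, |g n a| ≤ ε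

/-- A weakly-`p`-Dunford-Pettis subset of `X`: bounded, and every weakly `p`-summable
sequence in `X*` tends to `0` uniformly on it. -/
def WeaklyPDP (p : ℝ≥0∞) (A : Set X) : Prop :=
  IsBounded A ∧
    ∀ f : ℕ → StrongDual ℝ X, WeaklyPSummable p f → UnifNullOn (fun n a => f n a) A

/-- A weakly-`p`-L-subset of `X*`: bounded, and every weakly `p`-summable sequence
in `X` tends to `0` uniformly on it. -/
def WeaklyPLSet (p : ℝ≥0∞) (A : Set (StrongDual ℝ X)) : Prop :=
  IsBounded A ∧
    ∀ x : ℕ → X, WeaklyPSummable p x → UnifNullOn (fun n g => g (x n)) A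

/-- A weakly-`p`-Cauchy sequence. -/
def WeaklyPCauchy (p : ℝ≥0∞) (x : ℕ → X) : Prop :=
  ∀ φ ψ : ℕ → ℕ, StrictMono φ → StrictMono ψ →
    WeaklyPSummable p fun k => x (φ k) - x (ψ k)

/-- A weakly-`p`-precompact set: every sequence in it has a weakly-`p`-Cauchy
subsequence. -/
def WeaklyPPrecompact (p : ℝ≥0∞) (A : Set X) : Prop :=
  ∀ x : ℕ → X, (∀ n, x n ∈ A) →
    ∃ φ : ℕ → ℕ, StrictMono φ ∧ WeaklyPCauchy p fun k => x (φ k)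

/-- A weakly-`p`-precompact operator. -/
def WeaklyPPrecompactOp (p : ℝ≥0∞) (T : X →L[ℝ] Y) : Prop :=
  WeaklyPPrecompact p (⇑T '' closedBall 0 1)

/-- A `w*`-null sequence of functionals. -/
def WStarNull (f : ℕ → StrongDual ℝ X) : Prop :=
  ∀ x : X, Tendsto (fun n => f n x) atTop (𝓝 0)

/-- A limited subset of `X`: every `w*`-null sequence in `X*` tends to `0`
uniformly on it. -/
def LimitedSet (A : Set X) : Prop :=
  ∀ f : ℕ → StrongDual ℝ X, WStarNull f → UnifNullOn (fun n a => f n a) A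

/-- A weakly unconditionally convergent (wuc) series. -/
def WUC (x : ℕ → X) : Prop :=
  ∀ f : StrongDual ℝ X, Summable fun n => |f (x n)|

/-- An unconditionally converging operator: maps wuc series to unconditionally
convergent series. -/
def UncondConverging (T : X →L[ℝ] Y) : Prop :=
  ∀ x : ℕ → X, WUC x → Summable fun n => T (x n)

/-- A `V*`-subset of `X`. -/
def VStarSet (A : Set X) : Prop :=
  IsBounded A ∧ ∀ f : ℕ → StrongDual ℝ X, WUC f → UnifNullOn (fun n a => f n a) A

/-- `w*`-to-`w` continuity of an operator `T : X* → Y`, in the equivalent algebraic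
form: for every `g ∈ Y*` the functional `g ∘ T` on `X*` is given by evaluation at
a point of `X`. -/
def WStarToWCont (T : StrongDual ℝ X →L[ℝ] Y) : Prop :=
  ∀ g : StrongDual ℝ Y, ∃ x : X, ∀ f : StrongDual ℝ X, g (T f) = f x

end Defs

section SpaceProps
variable (p : ℝ≥0∞) (X : Type*) [NormedAddCommGroup X] [NormedSpace ℝ X]

/-- The Gelfand-Phillips property: every limited subset is relatively compact. -/
def GPspace : Prop :=
  ∀ A : Set X, Bornology.IsBounded A → LimitedSet A → IsCompact (closure A)

/-- The `p`-Gelfand-Phillips property: every limited weakly `p`-summable sequence is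
norm null. -/
def pGP : Prop :=
  ∀ x : ℕ → X, LimitedSet (Set.range x) → WeaklyPSummable p x → NormNull x

/-- Property `RDP_p`: every weakly-`p`-L-subset of `X*` is relatively weakly compact. -/
def RDPp : Prop :=
  ∀ A : Set (StrongDual ℝ X), WeaklyPLSet p A → RelWeaklyCompact A

/-- The Schur property. -/
def SchurSpace : Prop :=
  ∀ (x : ℕ → X) (a : X), WeaklyConvTo x a → Tendsto x atTop (𝓝 a)

/-- Weak sequential completeness. -/
def WeaklySeqComplete : Prop :=
  ∀ x : ℕ → X, WeaklyCauchySeq x → ∃ a : X, WeaklyConvTo x a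

/-- Pełczyński's property (V). -/
def PropertyV : Prop :=
  ∀ (Y : Type) [NormedAddCommGroup Y] [NormedSpace ℝ Y] [CompleteSpace Y],
    ∀ T : X →L[ℝ] Y, UncondConverging T → WeaklyCompactOp T

/-- Property (V*). -/
def PropertyVStar : Prop :=
  ∀ A : Set X, VStarSet A → RelWeaklyCompact A

/-- Reflexivity of a normed space: the canonical embedding into the double dual is
surjective. -/
def ReflexiveSpace : Prop :=
  Function.Surjective (NormedSpace.inclusionInDoubleDual ℝ X)

end SpaceProps

section Embeds
/-- `Z` embeds isomorphically into `W`. -/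
def EmbedsIn (Z W : Type*) [NormedAddCommGroup Z] [NormedSpace ℝ Z]
    [NormedAddCommGroup W] [NormedSpace ℝ W] : Prop :=
  ∃ f : Z →L[ℝ] W, ∃ c > (0 : ℝ), ∀ z : Z, c * ‖z‖ ≤ ‖f z‖

end Embeds

/-!
For an operator `T : Y → X`, `sup_{‖y‖ ≤ 1} |fₙ (T y)| = ‖T* fₙ‖`, so `T*` is `p`-convergent exactly
when `T (B_Y)` is a weakly-`p`-Dunford–Pettis set; this gives one implication. Conversely, a
sequence `(xₙ)` in a weakly-`p`-Dunford–Pettis set is the image of the unit vector basis of `ℓ¹`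
under `y ↦ ∑ yₙ xₙ`, whose adjoint sends `f` to `(f xₙ)ₙ ∈ ℓ^∞` and is therefore `p`-convergent;
weak compactness of that operator yields a weakly convergent subsequence of `(xₙ)`.
-/

section LpOneSynthesis

variable {𝕜 E F : Type*} [NontriviallyNormedField 𝕜] [NormedAddCommGroup E] [NormedSpace 𝕜 E]
  [NormedAddCommGroup F] [NormedSpace 𝕜 F]

lemma lp.one_summable_norm (y : lp (fun _ : ℕ => 𝕜) 1) : Summable fun n => ‖y n‖ := by
  simpa using (lp.memℓp y).summable (p := 1) (by simp)

lemma lp.one_tsum_norm (y : lp (fun _ : ℕ => 𝕜) 1) : ∑' n, ‖y n‖ = ‖y‖ := by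
  simpa using (lp.norm_rpow_eq_tsum (p := 1) (by simp) y).symm

lemma lp.one_summable_norm_smul (y : lp (fun _ : ℕ => 𝕜) 1) {x : ℕ → E} {M : ℝ}
    (hM : ∀ n, ‖x n‖ ≤ M) : Summable fun n => ‖y n • x n‖ :=
  ((lp.one_summable_norm y).mul_right M).of_nonneg_of_le (fun _ => norm_nonneg _)
    fun n => by rw [norm_smul]; exact mul_le_mul_of_nonneg_left (hM n) (norm_nonneg _)

lemma lp.one_norm_tsum_smul_le (y : lp (fun _ : ℕ => 𝕜) 1) {x : ℕ → E} {M : ℝ}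
    (hM : ∀ n, ‖x n‖ ≤ M) : ‖∑' n, y n • x n‖ ≤ M * ‖y‖ :=
  calc ‖∑' n, y n • x n‖ ≤ ∑' n, ‖y n • x n‖ :=
        norm_tsum_le_tsum_norm (lp.one_summable_norm_smul y hM)
    _ ≤ ∑' n, M * ‖y n‖ :=
        (lp.one_summable_norm_smul y hM).tsum_le_tsum
          (fun n => by
            rw [norm_smul, mul_comm]
            exact mul_le_mul_of_nonneg_right (hM n) (norm_nonneg _))
          ((lp.one_summable_norm y).mul_left M)
    _ = M * ‖y‖ := by rw [tsum_mul_left, lp.one_tsum_norm]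

variable [CompleteSpace E]

def lpOneSumSMul (x : ℕ → E) {M : ℝ} (hM : ∀ n, ‖x n‖ ≤ M) : lp (fun _ : ℕ => 𝕜) 1 →L[𝕜] E :=
  LinearMap.mkContinuous
    { toFun := fun y => ∑' n, y n • x n
      map_add' := fun y z => by
        simp only [lp.coeFn_add, Pi.add_apply, add_smul]
        exact ((lp.one_summable_norm_smul y hM).of_norm).tsum_add
          (lp.one_summable_norm_smul z hM).of_norm
      map_smul' := fun c y => by
        simp only [lp.coeFn_smul, Pi.smul_apply, smul_eq_mul, RingHom.id_apply, mul_smul]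
        exact (lp.one_summable_norm_smul y hM).of_norm.tsum_const_smul c }
    M fun y => lp.one_norm_tsum_smul_le y hM

variable {x : ℕ → E} {M : ℝ} (hM : ∀ n, ‖x n‖ ≤ M)

lemma lpOneSumSMul_apply (y : lp (fun _ : ℕ => 𝕜) 1) :
    lpOneSumSMul x hM y = ∑' n, y n • x n := rfl

lemma norm_lpOneSumSMul_le : ‖(lpOneSumSMul x hM : lp (fun _ : ℕ => 𝕜) 1 →L[𝕜] E)‖ ≤ M :=
  LinearMap.mkContinuous_norm_le _ ((norm_nonneg _).trans (hM 0)) _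

lemma lpOneSumSMul_single (n : ℕ) : lpOneSumSMul x hM (lp.single 1 n (1 : 𝕜)) = x n := by
  rw [lpOneSumSMul_apply,
    tsum_eq_single n fun m hm => by rw [lp.single_apply_ne 1 n _ hm, zero_smul],
    lp.single_apply_self, one_smul]

lemma comp_lpOneSumSMul [CompleteSpace F] (g : E →L[𝕜] F) {M' : ℝ} (hM' : ∀ n, ‖g (x n)‖ ≤ M') :
    g.comp (lpOneSumSMul x hM : lp (fun _ : ℕ => 𝕜) 1 →L[𝕜] E) = lpOneSumSMul (g ∘ x) hM' := by
  ext y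
  rw [ContinuousLinearMap.comp_apply, lpOneSumSMul_apply, lpOneSumSMul_apply,
    g.map_tsum (lp.one_summable_norm_smul y hM).of_norm]
  simp

end LpOneSynthesis

lemma tendsto_zero_of_forall_eventually_le {α : Type*} {l : Filter α} {u : α → ℝ}
    (h0 : ∀ a, 0 ≤ u a) (h : ∀ ε > 0, ∀ᶠ a in l, u a ≤ ε) : Tendsto u l (𝓝 0) :=
  tendsto_order.2 ⟨fun _ hε => .of_forall fun a => hε.trans_le (h0 a),
    fun ε hε => (h (ε / 2) (half_pos hε)).mono fun _ ha => ha.trans_lt (half_lt_self hε)⟩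

section WeaklyPDP

variable {X Y : Type*} [NormedAddCommGroup X] [NormedSpace ℝ X]
  [NormedAddCommGroup Y] [NormedSpace ℝ Y] {p : ℝ≥0∞}

lemma adjOp_apply (T : Y →L[ℝ] X) (g : StrongDual ℝ X) : adjOp T g = g.comp T := rfl

lemma weaklyPDP_image_closedBall {T : Y →L[ℝ] X} (hT : PConvergent p (adjOp T)) :
    WeaklyPDP p (T '' closedBall 0 1) := by
  refine ⟨T.lipschitz.isBounded_image isBounded_closedBall, fun f hf ε hε => ?_⟩
  obtain ⟨N, hN⟩ := eventually_atTop.1 ((hT f hf).eventually (ge_mem_nhds hε))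
  refine ⟨N, fun n hn => ?_⟩
  rintro _ ⟨y, hy, rfl⟩
  rw [mem_closedBall_zero_iff] at hy
  calc |f n (T y)| = ‖adjOp T (f n) y‖ := rfl
    _ ≤ ‖adjOp T (f n)‖ * ‖y‖ := (adjOp T (f n)).le_opNorm y
    _ ≤ ε * 1 := mul_le_mul (hN n hn) hy (norm_nonneg y) hε.le
    _ = ε := mul_one ε

variable [CompleteSpace X]

lemma pConvergent_adjOp_lpOneSumSMul {A : Set X}
    (hA : ∀ f : ℕ → StrongDual ℝ X, WeaklyPSummable p f → UnifNullOn (fun n a => f n a) A)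
    {x : ℕ → X} (hxA : ∀ n, x n ∈ A) {M : ℝ} (hM : ∀ n, ‖x n‖ ≤ M) :
    PConvergent p (adjOp (lpOneSumSMul x hM : lp (fun _ : ℕ => ℝ) 1 →L[ℝ] X)) := by
  refine fun f hf => tendsto_zero_of_forall_eventually_le (fun _ => norm_nonneg _) fun ε hε => ?_
  obtain ⟨N, hN⟩ := hA f hf ε hε
  filter_upwards [eventually_ge_atTop N] with n hn
  have hfx : ∀ m, ‖(f n ∘ x) m‖ ≤ ε := fun m => (Real.norm_eq_abs _).trans_le (hN n hn _ (hxA m))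
  rw [adjOp_apply, comp_lpOneSumSMul hM (f n) hfx]
  exact norm_lpOneSumSMul_le hfx

lemma relWeaklyCompact_of_weaklyPDP
    (hR : ∀ T : lp (fun _ : ℕ => ℝ) 1 →L[ℝ] X, PConvergent p (adjOp T) → WeaklyCompactOp T)
    {A : Set X} (hA : WeaklyPDP p A) : RelWeaklyCompact A := by
  intro x hxA
  obtain ⟨M, hM⟩ := isBounded_iff_forall_norm_le.1 hA.1
  have hxM : ∀ n, ‖x n‖ ≤ M := fun n => hM _ (hxA n)
  obtain ⟨a, φ, hφ, hxφ⟩ := hR _ (pConvergent_adjOp_lpOneSumSMul hA.2 hxA hxM)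
    (fun n => lpOneSumSMul x hxM (lp.single 1 n (1 : ℝ))) fun n =>
      ⟨_, by simp [lp.norm_single], rfl⟩
  exact ⟨a, φ, hφ, by simpa only [lpOneSumSMul_single] using hxφ⟩

end WeaklyPDP

theorem stmt_4_general {X : Type} [NormedAddCommGroup X] [NormedSpace ℝ X] [CompleteSpace X]
    (p : ℝ≥0∞) :
    ((∀ A : Set X, WeaklyPDP p A → RelWeaklyCompact A) ↔
      (∀ (Y : Type) [NormedAddCommGroup Y] [NormedSpace ℝ Y] [CompleteSpace Y],
        ∀ T : Y →L[ℝ] X, PConvergent p (adjOp T) → WeaklyCompactOp T)) ∧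
    ((∀ A : Set X, WeaklyPDP p A → RelWeaklyCompact A) ↔
      (∀ T : lp (fun _ : ℕ => ℝ) 1 →L[ℝ] X,
        PConvergent p (adjOp T) → WeaklyCompactOp T)) := by
  have of_weaklyPDP : (∀ A : Set X, WeaklyPDP p A → RelWeaklyCompact A) →
      ∀ (Y : Type) [NormedAddCommGroup Y] [NormedSpace ℝ Y] (T : Y →L[ℝ] X),
        PConvergent p (adjOp T) → WeaklyCompactOp T :=
    fun hP _ _ _ _ hT => hP _ (weaklyPDP_image_closedBall hT)
  exact ⟨⟨fun hP Y _ _ _ => of_weaklyPDP hP Y, fun hQ _ => relWeaklyCompact_of_weaklyPDP (hQ _)⟩,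
    ⟨fun hP => of_weaklyPDP hP _, fun hR _ => relWeaklyCompact_of_weaklyPDP hR⟩⟩

/-- For `1 ≤ p < ∞`, every weakly-`p`-Dunford-Pettis subset of `X` is
relatively weakly compact iff for every Banach space `Y` every operator `T : Y → X`
with `p`-convergent adjoint is weakly compact; moreover it suffices to test with
`Y = ℓ₁`. -/
theorem stmt_4 {X : Type} [NormedAddCommGroup X] [NormedSpace ℝ X] [CompleteSpace X]
    (p : ℝ≥0∞) (hp : 1 ≤ p) (hp' : p ≠ ⊤) :
    ((∀ A : Set X, WeaklyPDP p A → RelWeaklyCompact A) ↔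
      (∀ (Y : Type) [NormedAddCommGroup Y] [NormedSpace ℝ Y] [CompleteSpace Y],
        ∀ T : Y →L[ℝ] X, PConvergent p (adjOp T) → WeaklyCompactOp T)) ∧
    ((∀ A : Set X, WeaklyPDP p A → RelWeaklyCompact A) ↔
      (∀ T : lp (fun _ : ℕ => ℝ) 1 →L[ℝ] X,
        PConvergent p (adjOp T) → WeaklyCompactOp T)) :=
  stmt_4_general p
end
end

section
/- Let 1 < p < ∞. The following are equivalent for a Banach space X: (i) the closed unit ball B_{X*} is a weakly-p-L-set; (ii) every operator from ℓ_{p*} to X is compact; (iii) the identity of X is p-convergent (X ∈ C_p). -/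
open Filter Topology Metric NormedSpace Bornology ENNReal

noncomputable section

/-!
(i) ⇔ (iii) because `sup_{‖g‖ ≤ 1} |g x| = ‖x‖`.

(iii) ⇒ (ii): an operator `S : ℓ_q → X` is the norm limit of the finite-rank operators
`S ∘ P_N`, `P_N` the truncation to the first `N` coordinates, unless there are vectors `c_k` of
norm `≤ 1` supported on pairwise disjoint finite blocks with `‖S c_k‖ ≥ ε`. For `f ∈ X*` the
coordinates `d_n = f (S e_n)` satisfy `∑ |d_n|^p ≤ ‖f ∘ S‖^p`, so by Hölder on each block
`∑_k |f (S c_k)|^p ≤ ‖f ∘ S‖^p`: the sequence `(S c_k)` is weakly `p`-summable but not norm null.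

(ii) ⇒ (iii): by the closed graph theorem `f ↦ (f x_n)_n` is bounded from `X*` to `ℓ_p` for a
weakly `p`-summable `(x_n)`, so by Hölder `∑ a_n x_n` converges for `a ∈ ℓ_q` and defines an
operator `S` with `S e_n = x_n`. If `S` is compact, `(x_n)` lies in a compact set; being weakly
null, it is norm null.
-/

open Function

local notation "ℓ^" q:max => lp (fun _ : ℕ => ℝ) q

section Holder

variable {ι : Type*} (s : Finset ι) {p q : ℝ}

theorem Real.abs_inner_le_Lp_mul_Lq (f g : ι → ℝ) (hpq : p.HolderConjugate q) :
    |∑ i ∈ s, f i * g i| ≤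
      (∑ i ∈ s, |f i| ^ p) ^ (1 / p) * (∑ i ∈ s, |g i| ^ q) ^ (1 / q) := by
  refine abs_le.2 ⟨neg_le.1 ?_, Real.inner_le_Lp_mul_Lq s f g hpq⟩
  simpa [Finset.sum_neg_distrib] using Real.inner_le_Lp_mul_Lq s (-f) g hpq

theorem Real.exists_inner_eq_Lp (f : ι → ℝ) (hpq : p.HolderConjugate q) :
    ∃ g : ι → ℝ, ∑ i ∈ s, |g i| ^ q ≤ 1 ∧
      ∑ i ∈ s, f i * g i = (∑ i ∈ s, |f i| ^ p) ^ (1 / p) := by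
  obtain ⟨⟨g, hg, hfg⟩, -⟩ := NNReal.isGreatest_Lp s (fun i => ‖f i‖₊) hpq
  refine ⟨fun i => if 0 ≤ f i then (g i : ℝ) else -g i, ?_, ?_⟩
  · have habs : ∀ i, |(if 0 ≤ f i then (g i : ℝ) else -g i)| = g i := fun i => by
      split_ifs <;> simp
    simp only [habs]
    exact_mod_cast hg
  · have hmul : ∀ i, f i * (if 0 ≤ f i then (g i : ℝ) else -g i) = |f i| * g i := fun i => by
      split_ifs with h
      · rw [abs_of_nonneg h]
      · rw [abs_of_neg (not_le.1 h)]; ring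
    simp only [hmul]
    simpa using congrArg NNReal.toReal hfg

end Holder

section Truncation

variable {q : ℝ≥0∞}

theorem lp.single_eq_smul (n : ℕ) (c : ℝ) :
    lp.single (E := fun _ : ℕ => ℝ) q n c = c • lp.single q n 1 := by
  rw [← lp.single_smul, smul_eq_mul, mul_one]

variable [Fact (1 ≤ q)]

theorem lp.Lp_sum_le_norm {α : Type*} {E : α → Type*} [∀ i, NormedAddCommGroup (E i)]
    (hq : 0 < q.toReal) (f : lp E q) (s : Finset α) :
    (∑ i ∈ s, ‖f i‖ ^ q.toReal) ^ (1 / q.toReal) ≤ ‖f‖ := by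
  rw [one_div, Real.rpow_inv_le_iff_of_pos (by positivity) (norm_nonneg _) hq]
  exact lp.sum_rpow_le_norm_rpow hq f s

@[simp]
theorem lp.evalCLM_apply {𝕜 α : Type*} [NormedRing 𝕜] {E : α → Type*}
    [∀ i, NormedAddCommGroup (E i)] [∀ i, Module 𝕜 (E i)] [∀ i, IsBoundedSMul 𝕜 (E i)]
    (i : α) (f : lp E q) : lp.evalCLM 𝕜 E q i f = f i :=
  rfl

variable (q) in
def lpTrunc (s : Finset ℕ) : (ℓ^q) →L[ℝ] ℓ^q :=
  ∑ n ∈ s, (lp.evalCLM ℝ (fun _ : ℕ => ℝ) q n).smulRight (lp.single q n 1)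

theorem lpTrunc_apply (s : Finset ℕ) (a : ℓ^q) :
    lpTrunc q s a = ∑ n ∈ s, lp.single q n (a n) := by
  simp only [lpTrunc, FunLike.coe_sum, Finset.sum_apply, ContinuousLinearMap.smulRight_apply,
    lp.evalCLM_apply, lp.single_eq_smul (q := q) _ (a _)]

theorem apply_lpTrunc (T : (ℓ^q) →L[ℝ] ℝ) (s : Finset ℕ) (a : ℓ^q) :
    T (lpTrunc q s a) = ∑ n ∈ s, a n * T (lp.single q n 1) := by
  simp only [lpTrunc_apply, map_sum, lp.single_eq_smul (q := q) _ (a _), map_smul, smul_eq_mul]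

theorem lpTrunc_Ico {N M : ℕ} (h : N ≤ M) :
    lpTrunc q (Finset.Ico N M) = lpTrunc q (Finset.range M) - lpTrunc q (Finset.range N) :=
  Finset.sum_Ico_eq_sub _ h

theorem tendsto_lpTrunc_range (hq : q ≠ ⊤) (a : ℓ^q) :
    Tendsto (fun N => lpTrunc q (Finset.range N) a) atTop (𝓝 a) := by
  simpa only [lpTrunc_apply] using (lp.hasSum_single hq a).tendsto_sum_nat

variable (q) in
theorem isCompactOperator_lpTrunc (s : Finset ℕ) : IsCompactOperator (lpTrunc q s) := by
  refine Submodule.sum_mem (compactOperator (RingHom.id ℝ) (ℓ^q) (ℓ^q)) fun n _ => ?_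
  exact (isCompactOperator_of_locallyCompactSpace_dom (lp.evalCLM ℝ (fun _ : ℕ => ℝ) q n)).clm_comp
    ((ContinuousLinearMap.id ℝ ℝ).smulRight (lp.single q n 1))

variable {p : ℝ≥0∞}

theorem abs_apply_lpTrunc_le (hpq : p.toReal.HolderConjugate q.toReal) (T : (ℓ^q) →L[ℝ] ℝ)
    (s : Finset ℕ) (a : ℓ^q) :
    |T (lpTrunc q s a)| ≤
      (∑ n ∈ s, |T (lp.single q n 1)| ^ p.toReal) ^ (1 / p.toReal) * ‖a‖ := by
  rw [apply_lpTrunc, Finset.sum_congr rfl fun n _ => mul_comm (a n) _]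
  calc _ ≤ (∑ n ∈ s, |T (lp.single q n 1)| ^ p.toReal) ^ (1 / p.toReal) *
          (∑ n ∈ s, |a n| ^ q.toReal) ^ (1 / q.toReal) :=
        Real.abs_inner_le_Lp_mul_Lq s _ _ hpq
    _ ≤ _ := by
        gcongr
        simpa only [Real.norm_eq_abs] using lp.Lp_sum_le_norm hpq.symm.pos a s

theorem sum_rpow_abs_apply_single_le (hpq : p.toReal.HolderConjugate q.toReal)
    (T : (ℓ^q) →L[ℝ] ℝ) (s : Finset ℕ) :
    ∑ n ∈ s, |T (lp.single q n 1)| ^ p.toReal ≤ ‖T‖ ^ p.toReal := by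
  obtain ⟨g, hg, hgT⟩ := Real.exists_inner_eq_Lp s (fun n => T (lp.single q n 1)) hpq
  set A : ℓ^q := ∑ n ∈ s, lp.single q n (g n)
  have hA : ‖A‖ ≤ 1 := by
    refine (Real.rpow_le_rpow_iff (norm_nonneg _) zero_le_one hpq.symm.pos).1 ?_
    rw [Real.one_rpow, lp.norm_sum_single hpq.symm.pos]
    simpa only [Real.norm_eq_abs] using hg
  have hTA : T A = ∑ n ∈ s, T (lp.single q n 1) * g n := by
    simp only [A, map_sum, lp.single_eq_smul (q := q) _ (g _), map_smul, smul_eq_mul, mul_comm]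
  rw [← Real.rpow_inv_le_iff_of_pos (by positivity) (norm_nonneg _) hpq.pos, ← one_div, ← hgT,
    ← hTA]
  calc T A ≤ ‖T A‖ := Real.le_norm_self _
    _ ≤ ‖T‖ * ‖A‖ := T.le_opNorm A
    _ ≤ ‖T‖ := mul_le_of_le_one_right (norm_nonneg _) hA

end Truncation

theorem Nat.exists_pairwise_disjoint_finset_of_forall_ge {P : Finset ℕ → Prop}
    (h : ∀ N, ∃ s : Finset ℕ, (∀ n ∈ s, N ≤ n) ∧ P s) :
    ∃ B : ℕ → Finset ℕ, Pairwise (Disjoint on B) ∧ ∀ k, P (B k) := by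
  choose s hsN hsP using h
  set N : ℕ → ℕ := fun k => (fun m => m + (s m).sup id + 1)^[k] 0
  have hN : ∀ k, N (k + 1) = N k + (s (N k)).sup id + 1 := fun k =>
    Function.iterate_succ_apply' _ _ _
  have hmono : Monotone N := monotone_nat_of_le_succ fun k => by rw [hN]; omega
  have hlt : ∀ k, ∀ n ∈ s (N k), n < N (k + 1) := fun k n hn => by
    have := Finset.le_sup (f := id) hn
    rw [hN]
    simp only [id] at this
    omega
  refine ⟨fun k => s (N k), (pairwise_disjoint_on _).2 fun j k hjk => ?_, fun k => hsP _⟩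
  refine Finset.disjoint_left.2 fun n hj hk => ?_
  have := hmono (show j + 1 ≤ k from hjk)
  have := hlt j n hj
  have := hsN _ n hk
  omega

section Blocks

variable {p q : ℝ≥0∞} [Fact (1 ≤ q)]
variable {X Y : Type*} [NormedAddCommGroup X] [NormedSpace ℝ X]
  [NormedAddCommGroup Y] [NormedSpace ℝ Y]

theorem weaklyPSummable_apply_lpTrunc (hpq : p.toReal.HolderConjugate q.toReal)
    (S : (ℓ^q) →L[ℝ] X) {B : ℕ → Finset ℕ} (hB : Pairwise (Disjoint on B))
    {b : ℕ → ℓ^q} (hb : ∀ k, ‖b k‖ ≤ 1) :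
    WeaklyPSummable p fun k => S (lpTrunc q (B k) (b k)) := by
  intro f
  set T := f ∘L S
  have hblock : ∀ k, ‖T (lpTrunc q (B k) (b k))‖ ^ p.toReal ≤
      ∑ n ∈ B k, |T (lp.single q n 1)| ^ p.toReal := fun k => by
    rw [Real.norm_eq_abs, ← Real.le_rpow_inv_iff_of_pos (abs_nonneg _) (by positivity) hpq.pos,
      ← one_div]
    exact (abs_apply_lpTrunc_le hpq T (B k) (b k)).trans
      (mul_le_of_le_one_right (by positivity) (hb k))
  refine memℓp_gen' (C := ‖T‖ ^ p.toReal) fun t => ?_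
  calc ∑ k ∈ t, ‖T (lpTrunc q (B k) (b k))‖ ^ p.toReal
      ≤ ∑ k ∈ t, ∑ n ∈ B k, |T (lp.single q n 1)| ^ p.toReal :=
        Finset.sum_le_sum fun k _ => hblock k
    _ = ∑ n ∈ t.biUnion B, |T (lp.single q n 1)| ^ p.toReal :=
        (Finset.sum_biUnion (hB.set_pairwise _)).symm
    _ ≤ ‖T‖ ^ p.toReal := sum_rpow_abs_apply_single_le hpq T _

theorem exists_norm_apply_lpTrunc_Ico_gt (hq : q ≠ ⊤) (U : (ℓ^q) →L[ℝ] Y) {r : ℝ} {N : ℕ}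
    (h : r < ‖U - U ∘L lpTrunc q (Finset.range N)‖) :
    ∃ M, ∃ a : ℓ^q, ‖a‖ ≤ 1 ∧ r < ‖U (lpTrunc q (Finset.Ico N M) a)‖ := by
  obtain ⟨a, ha, hr⟩ := (U - U ∘L lpTrunc q (Finset.range N)).exists_lt_apply_of_lt_opNorm h
  rw [sub_apply, ContinuousLinearMap.comp_apply, ← map_sub] at hr
  have hlim : Tendsto (fun M => U (lpTrunc q (Finset.Ico N M) a)) atTop
      (𝓝 (U (a - lpTrunc q (Finset.range N) a))) := by
    refine ((U.continuous.tendsto _).comp ((tendsto_lpTrunc_range hq a).sub_const _)).congr'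
      (eventually_atTop.2 ⟨N, fun M hM => ?_⟩)
    simp [lpTrunc_Ico hM]
  obtain ⟨M, hM⟩ := (hlim.norm.eventually (lt_mem_nhds hr)).exists
  exact ⟨M, a, ha.le, hM⟩

theorem PConvergent.isCompactOperator_comp [CompleteSpace Y]
    (hpq : p.toReal.HolderConjugate q.toReal) {T : X →L[ℝ] Y} (hT : PConvergent p T)
    (S : (ℓ^q) →L[ℝ] X) : IsCompactOperator (T ∘L S) := by
  have hq : q ≠ ⊤ := (ENNReal.toReal_pos_iff.1 hpq.symm.pos).2.ne
  set U := T ∘L S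
  refine isCompactOperator_of_tendsto (l := atTop)
    (F := fun N => U ∘L lpTrunc q (Finset.range N)) ?_
    (Eventually.of_forall fun N => (isCompactOperator_lpTrunc q _).clm_comp U)
  by_contra hU
  obtain ⟨ε, hε, hfreq⟩ : ∃ ε > 0, ∀ N, ∃ n ≥ N, ε ≤ ‖U - U ∘L lpTrunc q (Finset.range n)‖ := by
    simpa [Metric.tendsto_atTop, dist_eq_norm'] using hU
  obtain ⟨B, hB, hBU⟩ := Nat.exists_pairwise_disjoint_finset_of_forall_ge
    (P := fun s => ∃ a : ℓ^q, ‖a‖ ≤ 1 ∧ ε / 2 < ‖U (lpTrunc q s a)‖) fun N => by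
      obtain ⟨n, hn, hεn⟩ := hfreq N
      obtain ⟨M, a, ha, hM⟩ :=
        exists_norm_apply_lpTrunc_Ico_gt hq U (r := ε / 2) (N := n) (by linarith)
      exact ⟨Finset.Ico n M, fun m hm => hn.trans (Finset.mem_Ico.1 hm).1, a, ha, hM⟩
  choose b hb hbU using hBU
  obtain ⟨k, hk⟩ := ((hT _ (weaklyPSummable_apply_lpTrunc hpq S hB hb)).eventually
    (gt_mem_nhds (half_pos hε))).exists
  exact (hbU k).not_gt hk

end Blocks

section WeaklyPSummable

variable {p q : ℝ≥0∞}
variable {X Y : Type*} [NormedAddCommGroup X] [NormedSpace ℝ X]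
  [NormedAddCommGroup Y] [NormedSpace ℝ Y] {x : ℕ → X}

theorem WeaklyPSummable.map (hx : WeaklyPSummable p x) (T : X →L[ℝ] Y) :
    WeaklyPSummable p fun n => T (x n) :=
  fun f => hx (f ∘L T)

theorem WeaklyPSummable.weaklyConvTo_zero (hp : 0 < p.toReal) (hx : WeaklyPSummable p x) :
    WeaklyConvTo x 0 := fun f => by
  have h := ((hx f).summable hp).tendsto_atTop_zero.rpow_const (p := p.toReal⁻¹)
    (Or.inr (by positivity))
  simp only [Real.rpow_rpow_inv (norm_nonneg _) hp.ne', Real.zero_rpow (inv_ne_zero hp.ne')] at h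
  simpa using tendsto_zero_iff_norm_tendsto_zero.2 h

theorem WeaklyConvTo.tendsto_of_mem_isCompact {a : X} (hx : WeaklyConvTo x a) {K : Set X}
    (hK : IsCompact K) (hxK : ∀ n, x n ∈ K) : Tendsto x atTop (𝓝 a) := by
  refine tendsto_of_subseq_tendsto fun ns hns => ?_
  obtain ⟨y, -, φ, hφ, hy⟩ := hK.tendsto_subseq fun n => hxK (ns n)
  have hya : y = a := SeparatingDual.eq_iff_forall_dual_eq.2 fun f =>
    tendsto_nhds_unique ((f.continuous.tendsto y).comp hy)
      ((hx f).comp (hns.comp hφ.tendsto_atTop))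
  exact ⟨φ, hya ▸ hy⟩

variable [Fact (1 ≤ p)]

def WeaklyPSummable.coeffCLM (hx : WeaklyPSummable p x) :
    StrongDual ℝ X →L[ℝ] lp (fun _ : ℕ => ℝ) p :=
  ContinuousLinearMap.ofSeqClosedGraph
    (g := { toFun := fun f => ⟨fun n => f (x n), hx f⟩
            map_add' := fun _ _ => rfl
            map_smul' := fun _ _ => rfl })
    fun _ f y hu hy => lp.ext <| funext fun n => tendsto_nhds_unique
      (((lp.evalCLM ℝ (fun _ : ℕ => ℝ) p n).continuous.tendsto y).comp hy)
      (((ContinuousLinearMap.apply ℝ ℝ (x n)).continuous.tendsto f).comp hu)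

theorem WeaklyPSummable.coeffCLM_apply (hx : WeaklyPSummable p x) (f : StrongDual ℝ X) (n : ℕ) :
    hx.coeffCLM f n = f (x n) :=
  rfl

theorem WeaklyPSummable.norm_sum_smul_le (hpq : p.toReal.HolderConjugate q.toReal)
    (hx : WeaklyPSummable p x) (s : Finset ℕ) (a : ℕ → ℝ) :
    ‖∑ n ∈ s, a n • x n‖ ≤ ‖hx.coeffCLM‖ * (∑ n ∈ s, |a n| ^ q.toReal) ^ (1 / q.toReal) := by
  refine NormedSpace.norm_le_dual_bound ℝ _ (by positivity) fun f => ?_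
  have hf : f (∑ n ∈ s, a n • x n) = ∑ n ∈ s, hx.coeffCLM f n * a n := by
    simp only [map_sum, map_smul, smul_eq_mul, hx.coeffCLM_apply, mul_comm]
  rw [hf, Real.norm_eq_abs]
  calc _ ≤ (∑ n ∈ s, |hx.coeffCLM f n| ^ p.toReal) ^ (1 / p.toReal) *
          (∑ n ∈ s, |a n| ^ q.toReal) ^ (1 / q.toReal) := Real.abs_inner_le_Lp_mul_Lq s _ _ hpq
    _ ≤ ‖hx.coeffCLM‖ * ‖f‖ * (∑ n ∈ s, |a n| ^ q.toReal) ^ (1 / q.toReal) := by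
        refine mul_le_mul_of_nonneg_right ?_ (by positivity)
        refine le_trans ?_ ((hx.coeffCLM).le_opNorm f)
        simpa only [Real.norm_eq_abs] using lp.Lp_sum_le_norm hpq.pos (hx.coeffCLM f) s
    _ = _ := by ring

end WeaklyPSummable

section Synthesis

variable {p q : ℝ≥0∞} [Fact (1 ≤ p)]
variable {X Y : Type*} [NormedAddCommGroup X] [NormedSpace ℝ X] [CompleteSpace X]
  [NormedAddCommGroup Y] [NormedSpace ℝ Y] {x : ℕ → X}

theorem WeaklyPSummable.summable_smul (hpq : p.toReal.HolderConjugate q.toReal)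
    (hx : WeaklyPSummable p x) (a : ℓ^q) : Summable fun n => a n • x n := by
  have ha : Summable fun n => |a n| ^ q.toReal := by
    simpa only [Real.norm_eq_abs] using (lp.memℓp a).summable hpq.symm.pos
  set C := ‖hx.coeffCLM‖
  have hq : 0 < 1 / q.toReal := one_div_pos.2 hpq.symm.pos
  have hC : Tendsto (fun δ : ℝ => C * δ ^ (1 / q.toReal)) (𝓝[>] 0) (𝓝 0) := by
    have := tendsto_const_nhds (x := C) |>.mul
      (Real.continuousAt_rpow_const 0 (1 / q.toReal) (Or.inr hq.le)).tendsto
    rw [Real.zero_rpow hq.ne', mul_zero] at this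
    exact this.mono_left nhdsWithin_le_nhds
  refine summable_iff_vanishing_norm.2 fun ε hε => ?_
  obtain ⟨δ, hδε, hδ⟩ := ((hC.eventually (gt_mem_nhds hε)).and self_mem_nhdsWithin).exists
  obtain ⟨s, hs⟩ := summable_iff_vanishing_norm.1 ha δ hδ
  refine ⟨s, fun t ht => ?_⟩
  calc ‖∑ n ∈ t, a n • x n‖ ≤ C * (∑ n ∈ t, |a n| ^ q.toReal) ^ (1 / q.toReal) :=
        hx.norm_sum_smul_le hpq t a
    _ ≤ C * δ ^ (1 / q.toReal) := by
        gcongr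
        exact (Real.le_norm_self _).trans (hs t ht).le
    _ < ε := hδε

variable [Fact (1 ≤ q)]

theorem WeaklyPSummable.exists_clm_single_eq (hpq : p.toReal.HolderConjugate q.toReal)
    (hx : WeaklyPSummable p x) : ∃ S : (ℓ^q) →L[ℝ] X, ∀ n, S (lp.single q n 1) = x n := by
  let S N : (ℓ^q) →L[ℝ] X :=
    ∑ n ∈ Finset.range N, (lp.evalCLM ℝ (fun _ : ℕ => ℝ) q n).smulRight (x n)
  have hS : Tendsto (fun N a => S N a) atTop (𝓝 fun a => ∑' n, a n • x n) :=
    tendsto_pi_nhds.2 fun a => by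
      simpa [S] using (hx.summable_smul hpq a).hasSum.tendsto_sum_nat
  refine ⟨continuousLinearMapOfTendsto S hS, fun n => ?_⟩
  change ∑' m, lp.single (E := fun _ : ℕ => ℝ) q n 1 m • x m = x n
  rw [tsum_eq_single n fun m hm => by rw [lp.single_apply_ne q n _ hm, zero_smul]]
  simp

theorem pConvergent_of_forall_isCompactOperator_comp (hpq : p.toReal.HolderConjugate q.toReal)
    {T : X →L[ℝ] Y} (hT : ∀ S : (ℓ^q) →L[ℝ] X, IsCompactOperator (T ∘L S)) :
    PConvergent p T := by
  intro x hx
  obtain ⟨S, hS⟩ := hx.exists_clm_single_eq hpq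
  obtain ⟨K, hK, hSK⟩ := (hT S).image_closedBall_subset_compact 1
  have hxK : ∀ n, T (x n) ∈ K := fun n => hSK ⟨lp.single q n 1, by
    simp [lp.norm_single (zero_lt_one.trans_le Fact.out)], by simp [hS]⟩
  exact tendsto_zero_iff_norm_tendsto_zero.1
    (((hx.map T).weaklyConvTo_zero hpq.pos).tendsto_of_mem_isCompact hK hxK)

theorem pConvergent_iff_forall_isCompactOperator_comp [CompleteSpace Y]
    (hpq : p.toReal.HolderConjugate q.toReal) {T : X →L[ℝ] Y} :
    PConvergent p T ↔ ∀ S : (ℓ^q) →L[ℝ] X, IsCompactOperator (T ∘L S) :=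
  ⟨fun hT => hT.isCompactOperator_comp hpq, pConvergent_of_forall_isCompactOperator_comp hpq⟩

end Synthesis

section DualBall

variable {X : Type*} [NormedAddCommGroup X] [NormedSpace ℝ X]

theorem unifNullOn_closedBall_iff_normNull (x : ℕ → X) :
    UnifNullOn (fun n (g : StrongDual ℝ X) => g (x n)) (closedBall 0 1) ↔ NormNull x := by
  constructor
  · intro h
    refine Metric.tendsto_atTop.2 fun ε hε => ?_
    obtain ⟨N, hN⟩ := h (ε / 2) (half_pos hε)
    refine ⟨N, fun n hn => ?_⟩
    obtain ⟨g, hg, hgx⟩ := exists_dual_vector'' ℝ (x n)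
    have : ‖x n‖ ≤ ε / 2 := by simpa [hgx] using hN n hn g (mem_closedBall_zero_iff.2 hg)
    rw [dist_zero_right, norm_norm]
    linarith
  · intro h ε hε
    obtain ⟨N, hN⟩ := eventually_atTop.1 (h.eventually (eventually_le_nhds hε))
    refine ⟨N, fun n hn g hg => ?_⟩
    calc |g (x n)| ≤ ‖g‖ * ‖x n‖ := g.le_opNorm (x n)
      _ ≤ 1 * ε := mul_le_mul (mem_closedBall_zero_iff.1 hg) (hN n hn) (norm_nonneg _) zero_le_one
      _ = ε := one_mul ε

theorem weaklyPLSet_closedBall_iff_pConvergent_id {p : ℝ≥0∞} :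
    WeaklyPLSet p (closedBall (0 : StrongDual ℝ X) 1) ↔
      PConvergent p (ContinuousLinearMap.id ℝ X) := by
  simp only [WeaklyPLSet, PConvergent, unifNullOn_closedBall_iff_normNull, isBounded_closedBall,
    true_and, ContinuousLinearMap.id_apply]

end DualBall

/-- For `1 < p < ∞` with conjugate exponent `q`, the following are
equivalent: (i) `B_{X*}` is a weakly-`p`-L-set; (ii) every operator `ℓ_q → X` is
compact; (iii) the identity of `X` is `p`-convergent (`X ∈ C_p`). -/
theorem stmt_11 {X : Type*} [NormedAddCommGroup X] [NormedSpace ℝ X] [CompleteSpace X]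
    (p q : ℝ≥0∞) (hp : 1 < p) (hp' : p ≠ ⊤) [Fact (1 ≤ q)] (hpq : p⁻¹ + q⁻¹ = 1) :
    (WeaklyPLSet p (closedBall (0 : StrongDual ℝ X) 1) ↔
      (∀ S : lp (fun _ : ℕ => ℝ) q →L[ℝ] X, IsCompactOperator S)) ∧
    (WeaklyPLSet p (closedBall (0 : StrongDual ℝ X) 1) ↔
      PConvergent p (ContinuousLinearMap.id ℝ X)) := by
  have : Fact (1 ≤ p) := ⟨hp.le⟩
  have hp1 : 1 < p.toReal := by simpa using (ENNReal.toReal_lt_toReal one_ne_top hp').2 hp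
  have hpq' : p.toReal.HolderConjugate q.toReal :=
    (ENNReal.HolderConjugate.toReal_iff hp1).2 (ENNReal.holderConjugate_iff.2 hpq)
  have hcompact : PConvergent p (ContinuousLinearMap.id ℝ X) ↔
      ∀ S : (ℓ^q) →L[ℝ] X, IsCompactOperator S := by
    simpa using pConvergent_iff_forall_isCompactOperator_comp hpq' (T := ContinuousLinearMap.id ℝ X)
  exact ⟨weaklyPLSet_closedBall_iff_pConvergent_id.trans hcompact,
    weaklyPLSet_closedBall_iff_pConvergent_id⟩
end
end
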